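/- arXiv:1909.02146 — 5 statements merged into one kernel-verified Lean document; each statement's English description precedes it below -/
import Mathlib

section
/- Let μ > 0, p > 0, 0 ≤ e < 1, t₀ ∈ ℝ, and let f : ℝ → ℝ be differentiable with f'(t) = √(μ/p³)·(1 + e·cos f(t))² for all t. Then for every t, ∫_{f(t₀)}^{f(t)} 1/(1 + e·cos τ)² dτ = √(μ/p³)·(t − t₀). -/
open intervalIntegral

/-- Substituting `u = f x` turns the left side into `∫ x in a..b, g (f x) * f' x`, whose
integrand is the constant `c`. -/
theorem intervalIntegral.integral_eq_mul_sub_of_comp_mul_deriv_eq {f g : ℝ → ℝ} {c : ℝ}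
    (hg : Continuous g) (hf : Differentiable ℝ f) (h : ∀ t, g (f t) * deriv f t = c)
    (a b : ℝ) : ∫ u in f a..f b, g u = c * (b - a) := by
  have hconst : (fun x ↦ (g ∘ f) x * deriv f x) = fun _ ↦ c := funext h
  calc ∫ u in f a..f b, g u = ∫ x in a..b, (g ∘ f) x * deriv f x :=
        (integral_comp_mul_deriv''' hf.continuous.continuousOn
          (fun x _ ↦ (hf x).hasDerivAt.hasDerivWithinAt) hg.continuousOn
          (hg.continuousOn.integrableOn_compact (isCompact_uIcc.image hf.continuous))
          (by rw [hconst]; exact continuous_const.integrableOn_uIcc)).symm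
    _ = c * (b - a) := by rw [hconst, integral_const, smul_eq_mul, mul_comm]

theorem Real.one_add_mul_cos_pos {e : ℝ} (he : |e| < 1) (τ : ℝ) : 0 < 1 + e * Real.cos τ := by
  have : |e * Real.cos τ| < 1 := by
    rw [abs_mul]
    exact lt_of_le_of_lt (mul_le_of_le_one_right (abs_nonneg e) (Real.abs_cos_le_one τ)) he
  linarith [neg_abs_le (e * Real.cos τ)]

theorem stmt_1_general (μ p e : ℝ) (he0 : 0 ≤ e) (he1 : e < 1)
    (t₀ : ℝ) (f : ℝ → ℝ) (hf : Differentiable ℝ f)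
    (hf' : ∀ t, deriv f t = Real.sqrt (μ / p ^ 3) * (1 + e * Real.cos (f t)) ^ 2) :
    ∀ t, (∫ τ in (f t₀)..(f t), 1 / (1 + e * Real.cos τ) ^ 2) =
      Real.sqrt (μ / p ^ 3) * (t - t₀) := by
  have hk : ∀ τ, 0 < 1 + e * Real.cos τ :=
    Real.one_add_mul_cos_pos (abs_lt.2 ⟨by linarith, he1⟩)
  refine integral_eq_mul_sub_of_comp_mul_deriv_eq ?_ hf (fun t ↦ ?_) t₀
  · exact continuous_const.div (by fun_prop) fun τ ↦ (pow_pos (hk τ) 2).ne'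
  · rw [hf', one_div, ← mul_assoc, mul_comm _ (Real.sqrt _), mul_assoc,
      inv_mul_cancel₀ (pow_pos (hk (f t)) 2).ne', mul_one]

open intervalIntegral in
/-- The Yamanaka–Ankersen integral `J(t) = ∫_{f(t₀)}^{f(t)} dτ/(1+e·cos τ)²` grows
linearly with time: it equals `√(μ/p³)·(t − t₀)`. -/
theorem stmt_1 (μ p e : ℝ) (hμ : 0 < μ) (hp : 0 < p) (he0 : 0 ≤ e) (he1 : e < 1)
    (t₀ : ℝ) (f : ℝ → ℝ) (hf : Differentiable ℝ f)
    (hf' : ∀ t, deriv f t = Real.sqrt (μ / p ^ 3) * (1 + e * Real.cos (f t)) ^ 2) :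
    ∀ t, (∫ τ in (f t₀)..(f t), 1 / (1 + e * Real.cos τ) ^ 2) =
      Real.sqrt (μ / p ^ 3) * (t - t₀) :=
  stmt_1_general μ p e he0 he1 t₀ f hf hf'
end

section
/- Let 0 ≤ e < 1 and define k(f) = 1 + e·cos f and φ₁(f) = k(f)·sin f. Then φ₁ is twice differentiable and φ₁''(f) + (4 − 3/k(f))·φ₁(f) = 0 for all f ∈ ℝ. -/
/-- The Yamanaka–Ankersen fundamental solution `φ₁ = k·sin f`, with `k = 1 + e·cos f`,
solves the homogeneous decoupled radial Tschauner–Hempel equation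
`φ₁'' + (4 − 3/k)·φ₁ = 0`. -/
theorem stmt_3 (e : ℝ) (he0 : 0 ≤ e) (he1 : e < 1)
    (k φ₁ : ℝ → ℝ) (hk : ∀ f, k f = 1 + e * Real.cos f)
    (hφ₁ : ∀ f, φ₁ f = k f * Real.sin f) :
    Differentiable ℝ φ₁ ∧ Differentiable ℝ (deriv φ₁) ∧
      ∀ f, deriv (deriv φ₁) f + (4 - 3 / k f) * φ₁ f = 0 := by
  have hφ : ∀ f, φ₁ f = (1 + e * Real.cos f) * Real.sin f := by
    intro f; rw [hφ₁, hk]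
  have hd1 : ∀ f, HasDerivAt φ₁
      (Real.cos f + e * (Real.cos f * Real.cos f - Real.sin f * Real.sin f)) f := by
    intro f
    have h : HasDerivAt (fun f => (1 + e * Real.cos f) * Real.sin f)
        ((e * (-Real.sin f)) * Real.sin f + (1 + e * Real.cos f) * Real.cos f) f := by
      exact (((Real.hasDerivAt_cos f).const_mul e).const_add 1).mul (Real.hasDerivAt_sin f)
    have h' : HasDerivAt φ₁
        ((e * (-Real.sin f)) * Real.sin f + (1 + e * Real.cos f) * Real.cos f) f := by
      have : φ₁ = fun f => (1 + e * Real.cos f) * Real.sin f := funext hφ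
      rw [this]; exact h
    convert h' using 1; ring
  have hdiff1 : Differentiable ℝ φ₁ := fun f => (hd1 f).differentiableAt
  have hderiv1 : deriv φ₁ = fun f =>
      Real.cos f + e * (Real.cos f * Real.cos f - Real.sin f * Real.sin f) := by
    funext f; exact (hd1 f).deriv
  have hd2 : ∀ f, HasDerivAt (deriv φ₁)
      (-Real.sin f - 4 * e * (Real.sin f * Real.cos f)) f := by
    intro f
    rw [hderiv1]
    have h : HasDerivAt (fun f : ℝ =>
        Real.cos f + e * (Real.cos f * Real.cos f - Real.sin f * Real.sin f))
        (-Real.sin f + e * (((-Real.sin f) * Real.cos f + Real.cos f * (-Real.sin f)) -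
          (Real.cos f * Real.sin f + Real.sin f * Real.cos f))) f := by
      exact (Real.hasDerivAt_cos f).add
        ((((Real.hasDerivAt_cos f).mul (Real.hasDerivAt_cos f)).sub
          ((Real.hasDerivAt_sin f).mul (Real.hasDerivAt_sin f))).const_mul e)
    convert h using 1; ring
  have hdiff2 : Differentiable ℝ (deriv φ₁) := fun f => (hd2 f).differentiableAt
  refine ⟨hdiff1, hdiff2, fun f => ?_⟩
  have hk0 : k f ≠ 0 := by
    rw [hk]
    have : e * Real.cos f ≥ -e := by nlinarith [Real.neg_one_le_cos f, Real.cos_le_one f]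
    nlinarith
  have h2 : deriv (deriv φ₁) f = -Real.sin f - 4 * e * (Real.sin f * Real.cos f) :=
    (hd2 f).deriv
  rw [h2, hφ₁ f, hk]
  have hkf : k f = 1 + e * Real.cos f := hk f
  field_simp [hkf ▸ hk0]
  ring
end

section
/- Let 0 ≤ e < 1, define k(f) = 1 + e·cos f, let J : ℝ → ℝ be differentiable with J'(f) = 1/k(f)², and set φ₁(f) = k(f)·sin f and φ₂(f) = 3e²·k(f)·J(f)·sin f + k(f)·cos f − 2e. If c₁, c₂ ∈ ℝ satisfy c₁·φ₁(f) + c₂·φ₂(f) = 0 for all f ∈ ℝ, then c₁ = 0 and c₂ = 0. -/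
/-- Linear independence of the Yamanaka–Ankersen fundamental solutions
`φ₁ = k·sin f` and `φ₂ = 3e²·k·J·sin f + k·cos f − 2e` (with `k = 1 + e·cos f`
and `J' = 1/k²`): if `c₁·φ₁ + c₂·φ₂` vanishes identically then `c₁ = c₂ = 0`. -/
theorem stmt_6 (e : ℝ) (he0 : 0 ≤ e) (he1 : e < 1)
    (k : ℝ → ℝ) (hk : ∀ f, k f = 1 + e * Real.cos f)
    (J : ℝ → ℝ) (hJ : Differentiable ℝ J) (hJ' : ∀ f, deriv J f = 1 / (k f) ^ 2)
    (φ₁ φ₂ : ℝ → ℝ) (hφ₁ : ∀ f, φ₁ f = k f * Real.sin f)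
    (hφ₂ : ∀ f, φ₂ f = 3 * e ^ 2 * k f * J f * Real.sin f + k f * Real.cos f - 2 * e)
    (c₁ c₂ : ℝ) (h : ∀ f, c₁ * φ₁ f + c₂ * φ₂ f = 0) :
    c₁ = 0 ∧ c₂ = 0 := by
  have h0 := h 0
  rw [hφ₁, hφ₂, hk] at h0
  simp [Real.cos_zero, Real.sin_zero] at h0
  have hc2 : c₂ = 0 := by
    rcases h0 with h0 | h0
    · exact h0
    · linarith
  subst hc2
  refine ⟨?_, rfl⟩
  have h1 := h (Real.pi / 2)
  rw [hφ₁, hk] at h1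
  simp [Real.cos_pi_div_two, Real.sin_pi_div_two] at h1
  exact h1
end

section
/- Let 0 ≤ e < 1, define k(f) = 1 + e·cos f, fix f₀ ∈ ℝ, let J : ℝ → ℝ be differentiable with J'(f) = 1/k(f)² and J(f₀) = 0, set φ₁(f) = k(f)·sin f and φ₂(f) = 3e²·k(f)·J(f)·sin f + k(f)·cos f − 2e, and let R : ℝ → ℝ be continuous. Define φ_p(f) = φ₁(f)·∫_{f₀}^{f} φ₂(τ)·R(τ)/(1−e²) dτ − φ₂(f)·∫_{f₀}^{f} φ₁(τ)·R(τ)/(1−e²) dτ. Then φ_p is twice differentiable with φ_p''(f) + (4 − 3/k(f))·φ_p(f) = R(f) for all f, and φ_p(f₀) = 0 and φ_p'(f₀) = 0. -/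
/-! Variation of parameters: if `y₁, y₂` solve `y'' + q y = 0` with constant Wronskian
`W = y₁' y₂ - y₁ y₂' ≠ 0`, then `y₁ ∫ y₂ R / W - y₂ ∫ y₁ R / W` solves `y'' + q y = R`; the terms
coming from differentiating the integrals cancel in the first derivative and add up to
`W · R / W = R` in the second. For the radial equation, `q = 4 - 3 / k` with `k = 1 + e cos f`
never vanishing since `|e| < 1`, and checking that the Yamanaka–Ankersen functions solve the
homogeneous equation with Wronskian `1 - e²` is a trigonometric computation. -/

section VariationOfParameters

variable {y₁ y₂ y₁' y₂' q R : ℝ → ℝ} {W f₀ : ℝ}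

noncomputable def variationOfParameters (y₁ y₂ R : ℝ → ℝ) (W f₀ : ℝ) (f : ℝ) : ℝ :=
  y₁ f * (∫ τ in f₀..f, y₂ τ * R τ / W) - y₂ f * (∫ τ in f₀..f, y₁ τ * R τ / W)

theorem hasDerivAt_integral_mul_div {y : ℝ → ℝ} (hy : Continuous y) (hR : Continuous R)
    (f : ℝ) : HasDerivAt (fun x => ∫ τ in f₀..x, y τ * R τ / W) (y f * R f / W) f :=
  ((hy.mul hR).div_const W).integral_hasStrictDerivAt f₀ f |>.hasDerivAt

theorem hasDerivAt_variationOfParameters (h₁ : ∀ f, HasDerivAt y₁ (y₁' f) f)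
    (h₂ : ∀ f, HasDerivAt y₂ (y₂' f) f) (hR : Continuous R) (f : ℝ) :
    HasDerivAt (variationOfParameters y₁ y₂ R W f₀)
      (y₁' f * (∫ τ in f₀..f, y₂ τ * R τ / W) - y₂' f * (∫ τ in f₀..f, y₁ τ * R τ / W)) f := by
  have hc₁ : Continuous y₁ := continuous_iff_continuousAt.2 fun f => (h₁ f).continuousAt
  have hc₂ : Continuous y₂ := continuous_iff_continuousAt.2 fun f => (h₂ f).continuousAt
  refine (((h₁ f).mul (hasDerivAt_integral_mul_div hc₂ hR f)).sub
    ((h₂ f).mul (hasDerivAt_integral_mul_div hc₁ hR f))).congr_deriv ?_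
  ring

theorem hasDerivAt_deriv_variationOfParameters (h₁ : ∀ f, HasDerivAt y₁ (y₁' f) f)
    (h₂ : ∀ f, HasDerivAt y₂ (y₂' f) f) (h₁' : ∀ f, HasDerivAt y₁' (-(q f * y₁ f)) f)
    (h₂' : ∀ f, HasDerivAt y₂' (-(q f * y₂ f)) f)
    (hW : ∀ f, y₁' f * y₂ f - y₁ f * y₂' f = W) (hW0 : W ≠ 0) (hR : Continuous R) (f : ℝ) :
    HasDerivAt (deriv (variationOfParameters y₁ y₂ R W f₀))
      (R f - q f * variationOfParameters y₁ y₂ R W f₀ f) f := by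
  have hc₁ : Continuous y₁ := continuous_iff_continuousAt.2 fun f => (h₁ f).continuousAt
  have hc₂ : Continuous y₂ := continuous_iff_continuousAt.2 fun f => (h₂ f).continuousAt
  rw [funext fun f => (hasDerivAt_variationOfParameters (W := W) (f₀ := f₀) h₁ h₂ hR f).deriv]
  refine (((h₁' f).mul (hasDerivAt_integral_mul_div hc₂ hR f)).sub
    ((h₂' f).mul (hasDerivAt_integral_mul_div hc₁ hR f))).congr_deriv ?_
  have hWR : y₁' f * (y₂ f * R f / W) - y₂' f * (y₁ f * R f / W) = R f := by
    rw [show y₁' f * (y₂ f * R f / W) - y₂' f * (y₁ f * R f / W)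
        = (y₁' f * y₂ f - y₁ f * y₂' f) * R f / W by ring, hW f]
    field_simp
  unfold variationOfParameters
  linear_combination hWR

theorem variationOfParameters_isSolution (h₁ : ∀ f, HasDerivAt y₁ (y₁' f) f)
    (h₂ : ∀ f, HasDerivAt y₂ (y₂' f) f) (h₁' : ∀ f, HasDerivAt y₁' (-(q f * y₁ f)) f)
    (h₂' : ∀ f, HasDerivAt y₂' (-(q f * y₂ f)) f)
    (hW : ∀ f, y₁' f * y₂ f - y₁ f * y₂' f = W) (hW0 : W ≠ 0) (hR : Continuous R) :
    let y := variationOfParameters y₁ y₂ R W f₀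
    Differentiable ℝ y ∧ Differentiable ℝ (deriv y) ∧
      (∀ f, deriv (deriv y) f + q f * y f = R f) ∧ y f₀ = 0 ∧ deriv y f₀ = 0 := by
  have hy := hasDerivAt_variationOfParameters (W := W) (f₀ := f₀) h₁ h₂ hR
  have hy' := hasDerivAt_deriv_variationOfParameters (f₀ := f₀) h₁ h₂ h₁' h₂' hW hW0 hR
  refine ⟨fun f => (hy f).differentiableAt, fun f => (hy' f).differentiableAt,
    fun f => by rw [(hy' f).deriv]; ring, ?_, ?_⟩
  · simp [variationOfParameters]
  · simp [(hy f₀).deriv]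

end VariationOfParameters

namespace YamanakaAnkersen

open Real

variable (e : ℝ) (J : ℝ → ℝ)

noncomputable def k (f : ℝ) : ℝ := 1 + e * cos f

noncomputable def φ₁ (f : ℝ) : ℝ := k e f * sin f

noncomputable def φ₂ (f : ℝ) : ℝ := 3 * e ^ 2 * k e f * J f * sin f + k e f * cos f - 2 * e

noncomputable def φ₁' (f : ℝ) : ℝ := k e f * cos f - e * sin f ^ 2

noncomputable def φ₂' (f : ℝ) : ℝ :=
  3 * e ^ 2 * (J f * φ₁' e f + sin f / k e f) - e * sin f * cos f - k e f * sin f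

variable {e J}

theorem k_pos (he : |e| < 1) (f : ℝ) : 0 < k e f := by
  have : |e * cos f| < 1 := by
    rw [abs_mul]
    exact (mul_le_of_le_one_right (abs_nonneg e) (abs_cos_le_one f)).trans_lt he
  unfold k
  linarith [neg_abs_le (e * cos f)]

theorem hasDerivAt_k (f : ℝ) : HasDerivAt (k e) (-(e * sin f)) f :=
  (((hasDerivAt_cos f).const_mul e).const_add 1).congr_deriv (by ring)

theorem hasDerivAt_φ₁ (f : ℝ) : HasDerivAt (φ₁ e) (φ₁' e f) f :=
  ((hasDerivAt_k f).mul (hasDerivAt_sin f)).congr_deriv (by unfold φ₁'; ring)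

theorem hasDerivAt_φ₁' {f : ℝ} (hk : k e f ≠ 0) :
    HasDerivAt (φ₁' e) (-((4 - 3 / k e f) * φ₁ e f)) f := by
  refine (((hasDerivAt_k f).mul (hasDerivAt_cos f)).sub
    (((hasDerivAt_sin f).pow 2).const_mul e)).congr_deriv ?_
  unfold φ₁
  field_simp
  unfold k
  ring

theorem hasDerivAt_φ₂ {f : ℝ} (hJ : HasDerivAt J (1 / k e f ^ 2) f) (hk : k e f ≠ 0) :
    HasDerivAt (φ₂ e J) (φ₂' e J f) f := by
  refine (((((hasDerivAt_k f).const_mul (3 * e ^ 2)).mul hJ).mul (hasDerivAt_sin f)).add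
    ((hasDerivAt_k f).mul (hasDerivAt_cos f))).sub_const (2 * e) |>.congr_deriv ?_
  simp only [φ₂', φ₁', Pi.mul_apply]
  field_simp
  ring

theorem hasDerivAt_φ₂' {f : ℝ} (hJ : HasDerivAt J (1 / k e f ^ 2) f) (hk : k e f ≠ 0) :
    HasDerivAt (φ₂' e J) (-((4 - 3 / k e f) * φ₂ e J f)) f := by
  refine (((((hJ.mul (hasDerivAt_φ₁' hk)).add
    ((hasDerivAt_sin f).div (hasDerivAt_k (e := e) f) hk)).const_mul
    (3 * e ^ 2)).sub (((hasDerivAt_sin f).const_mul e).mul (hasDerivAt_cos f))).sub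
    ((hasDerivAt_k (e := e) f).mul (hasDerivAt_sin f))).congr_deriv ?_
  simp only [φ₂, φ₁, φ₁']
  field_simp
  unfold k
  linear_combination (2 * e * (1 + e * cos f) ^ 2) * sin_sq_add_cos_sq f

theorem wronskian_φ₁_φ₂ {f : ℝ} (hk : k e f ≠ 0) :
    φ₁' e f * φ₂ e J f - φ₁ e f * φ₂' e J f = 1 - e ^ 2 := by
  unfold φ₁ φ₂ φ₂' φ₁'
  field_simp
  unfold k
  linear_combination ((1 + e * cos f) ^ 2 - e ^ 2) * sin_sq_add_cos_sq f

end YamanakaAnkersen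

theorem stmt_7_general (e : ℝ) (he0 : 0 ≤ e) (he1 : e < 1)
    (k : ℝ → ℝ) (hk : ∀ f, k f = 1 + e * Real.cos f)
    (f₀ : ℝ) (J : ℝ → ℝ) (hJ : Differentiable ℝ J)
    (hJ' : ∀ f, deriv J f = 1 / (k f) ^ 2)
    (φ₁ φ₂ : ℝ → ℝ) (hφ₁ : ∀ f, φ₁ f = k f * Real.sin f)
    (hφ₂ : ∀ f, φ₂ f = 3 * e ^ 2 * k f * J f * Real.sin f + k f * Real.cos f - 2 * e)
    (R : ℝ → ℝ) (hR : Continuous R)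
    (φp : ℝ → ℝ)
    (hφp : ∀ f, φp f = φ₁ f * (∫ τ in f₀..f, φ₂ τ * R τ / (1 - e ^ 2))
      - φ₂ f * (∫ τ in f₀..f, φ₁ τ * R τ / (1 - e ^ 2))) :
    Differentiable ℝ φp ∧ Differentiable ℝ (deriv φp) ∧
      (∀ f, deriv (deriv φp) f + (4 - 3 / k f) * φp f = R f) ∧
      φp f₀ = 0 ∧ deriv φp f₀ = 0 := by
  obtain rfl : k = YamanakaAnkersen.k e := funext hk
  obtain rfl : φ₁ = YamanakaAnkersen.φ₁ e := funext hφ₁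
  obtain rfl : φ₂ = YamanakaAnkersen.φ₂ e J := funext hφ₂
  obtain rfl : φp = variationOfParameters (YamanakaAnkersen.φ₁ e)
    (YamanakaAnkersen.φ₂ e J) R (1 - e ^ 2) f₀ := funext hφp
  have hk0 : ∀ f, YamanakaAnkersen.k e f ≠ 0 := fun f =>
    (YamanakaAnkersen.k_pos (abs_lt.2 ⟨by linarith, he1⟩) f).ne'
  have hJk : ∀ f, HasDerivAt J (1 / YamanakaAnkersen.k e f ^ 2) f := fun f =>
    hJ' f ▸ (hJ f).hasDerivAt
  have he2 : (1 : ℝ) - e ^ 2 ≠ 0 := by nlinarith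
  exact variationOfParameters_isSolution YamanakaAnkersen.hasDerivAt_φ₁
    (fun f => YamanakaAnkersen.hasDerivAt_φ₂ (hJk f) (hk0 f))
    (fun f => YamanakaAnkersen.hasDerivAt_φ₁' (hk0 f))
    (fun f => YamanakaAnkersen.hasDerivAt_φ₂' (hJk f) (hk0 f))
    (fun f => YamanakaAnkersen.wronskian_φ₁_φ₂ (hk0 f)) he2 hR

/-- Variation of parameters for the inhomogeneous decoupled radial equation
`x'' + (4 − 3/k)·x = R(f)`: with fundamental solutions `φ₁ = k·sin f` and
`φ₂ = 3e²·k·J·sin f + k·cos f − 2e` (Wronskian `1 − e²`), the function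
`φ_p = φ₁·∫_{f₀}^f φ₂R/(1−e²) − φ₂·∫_{f₀}^f φ₁R/(1−e²)` is a particular solution
with zero initial conditions at `f₀`. -/
theorem stmt_7 (e : ℝ) (he0 : 0 ≤ e) (he1 : e < 1)
    (k : ℝ → ℝ) (hk : ∀ f, k f = 1 + e * Real.cos f)
    (f₀ : ℝ) (J : ℝ → ℝ) (hJ : Differentiable ℝ J)
    (hJ' : ∀ f, deriv J f = 1 / (k f) ^ 2) (hJ0 : J f₀ = 0)
    (φ₁ φ₂ : ℝ → ℝ) (hφ₁ : ∀ f, φ₁ f = k f * Real.sin f)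
    (hφ₂ : ∀ f, φ₂ f = 3 * e ^ 2 * k f * J f * Real.sin f + k f * Real.cos f - 2 * e)
    (R : ℝ → ℝ) (hR : Continuous R)
    (φp : ℝ → ℝ)
    (hφp : ∀ f, φp f = φ₁ f * (∫ τ in f₀..f, φ₂ τ * R τ / (1 - e ^ 2))
      - φ₂ f * (∫ τ in f₀..f, φ₁ τ * R τ / (1 - e ^ 2))) :
    Differentiable ℝ φp ∧ Differentiable ℝ (deriv φp) ∧
      (∀ f, deriv (deriv φp) f + (4 - 3 / k f) * φp f = R f) ∧
      φp f₀ = 0 ∧ deriv φp f₀ = 0 :=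
  stmt_7_general e he0 he1 k hk f₀ J hJ hJ' φ₁ φ₂ hφ₁ hφ₂ R hR φp hφp
end

section
/- Let 0 ≤ e < 1, define k(f) = 1 + e·cos f, let J : ℝ → ℝ be differentiable with J'(f) = 1/k(f)², and let K₁,…,K₆ ∈ ℝ. Define ρ̃(f) = K₁·(1 − (3/2)·e·k(f)·J(f)·sin f) + K₂·k(f)·sin f + K₃·k(f)·cos f, θ(f) = K₄ − (3/2)·K₁·k(f)²·J(f) + K₂·(1 + k(f))·cos f − K₃·(1 + k(f))·sin f, and φ(f) = K₅·sin f + K₆·cos f. Then for all f ∈ ℝ: ρ̃''(f) − 2θ'(f) − (3/k(f))·ρ̃(f) = 0, θ''(f) + 2ρ̃'(f) = 0, and φ''(f) + φ(f) = 0. -/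
/-!
Differentiating `θ` and using `J' = 1/k²` cancels every `J`-term and gives the first integral
`θ' + 2ρ̃ = K₁/2 + e K₃`. This yields the second equation at once and turns the first into
`ρ̃'' + (4 - 3/k) ρ̃ = K₁ + 2 e K₃`, a linear equation which the three building blocks
`k sin f`, `k cos f` and `k J sin f` of `ρ̃` each solve with an explicit right-hand side.
-/

open Real

def HasSecondDeriv (y g : ℝ → ℝ) : Prop :=
  ∃ y' : ℝ → ℝ, (∀ f, HasDerivAt y (y' f) f) ∧ ∀ f, HasDerivAt y' (g f) f

namespace HasSecondDeriv

variable {y z g h : ℝ → ℝ}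

theorem deriv_deriv (hy : HasSecondDeriv y g) (f : ℝ) : deriv (deriv y) f = g f := by
  obtain ⟨y', hy', hy''⟩ := hy
  rw [show deriv y = y' from funext fun x => (hy' x).deriv, (hy'' f).deriv]

theorem congr (hy : HasSecondDeriv y g) (hg : ∀ f, g f = h f) : HasSecondDeriv y h :=
  let ⟨y', hy', hy''⟩ := hy
  ⟨y', hy', fun f => hg f ▸ hy'' f⟩

theorem add (hy : HasSecondDeriv y g) (hz : HasSecondDeriv z h) :
    HasSecondDeriv (fun f => y f + z f) (fun f => g f + h f) :=
  let ⟨y', hy', hy''⟩ := hy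
  let ⟨z', hz', hz''⟩ := hz
  ⟨fun f => y' f + z' f, fun f => (hy' f).add (hz' f), fun f => (hy'' f).add (hz'' f)⟩

theorem const_mul (c : ℝ) (hy : HasSecondDeriv y g) :
    HasSecondDeriv (fun f => c * y f) (fun f => c * g f) :=
  let ⟨y', hy', hy''⟩ := hy
  ⟨fun f => c * y' f, fun f => (hy' f).const_mul c, fun f => (hy'' f).const_mul c⟩

theorem const_sub (c : ℝ) (hy : HasSecondDeriv y g) :
    HasSecondDeriv (fun f => c - y f) (fun f => -g f) :=
  let ⟨y', hy', hy''⟩ := hy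
  ⟨fun f => -y' f, fun f => (hy' f).const_sub c, fun f => (hy'' f).neg⟩

end HasSecondDeriv

theorem tschaunerHempel_inPlane_of_firstIntegral {k ρ θ : ℝ → ℝ} {c : ℝ}
    (hθ : ∀ f, HasDerivAt θ (c - 2 * ρ f) f)
    (hρ : HasSecondDeriv ρ fun f => 2 * c - (4 - 3 / k f) * ρ f) :
    (∀ f, deriv (deriv ρ) f - 2 * deriv θ f - 3 / k f * ρ f = 0) ∧
    (∀ f, deriv (deriv θ) f + 2 * deriv ρ f = 0) := by
  obtain ⟨ρ', hρ', -⟩ := id hρ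
  have hθ' : deriv θ = fun f => c - 2 * ρ f := funext fun f => (hθ f).deriv
  refine ⟨fun f => ?_, fun f => ?_⟩
  · rw [hρ.deriv_deriv, hθ']
    ring
  · rw [hθ', ((hρ' f).const_mul 2).const_sub c |>.deriv, (hρ' f).deriv]
    ring

theorem hasSecondDeriv_sin : HasSecondDeriv sin fun f => -sin f :=
  ⟨cos, hasDerivAt_sin, hasDerivAt_cos⟩

theorem hasSecondDeriv_cos : HasSecondDeriv cos fun f => -cos f :=
  ⟨fun f => -sin f, hasDerivAt_cos, fun f => (hasDerivAt_sin f).neg⟩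

theorem one_add_mul_cos_ne_zero {e : ℝ} (he : |e| < 1) (f : ℝ) : 1 + e * cos f ≠ 0 := by
  have := neg_abs_le (e * cos f)
  have := (abs_mul e (cos f)).trans_le (mul_le_of_le_one_right (abs_nonneg e) (abs_cos_le_one f))
  linarith

section TschaunerHempel

variable {e : ℝ} {k J : ℝ → ℝ}

theorem hasDerivAt_of_eq_one_add_mul_cos (hk : ∀ f, k f = 1 + e * cos f) (f : ℝ) :
    HasDerivAt k (-(e * sin f)) f := by
  rw [show k = fun f => 1 + e * cos f from funext hk]
  simpa using ((hasDerivAt_cos f).const_mul e).const_add 1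

theorem hasSecondDeriv_mul_sin (hk : ∀ f, k f = 1 + e * cos f) (hk0 : ∀ f, k f ≠ 0) :
    HasSecondDeriv (fun f => k f * sin f) fun f => -((4 - 3 / k f) * (k f * sin f)) := by
  have hk' := hasDerivAt_of_eq_one_add_mul_cos hk
  refine ⟨fun f => k f * cos f - e * sin f ^ 2, fun f => ?_, fun f => ?_⟩
  · exact ((hk' f).mul (hasDerivAt_sin f)).congr_deriv (by ring)
  · refine (((hk' f).mul (hasDerivAt_cos f)).sub
      (((hasDerivAt_sin f).pow 2).const_mul e)).congr_deriv ?_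
    field_simp [hk0 f]
    rw [hk]
    ring

theorem hasSecondDeriv_mul_cos (hk : ∀ f, k f = 1 + e * cos f) (hk0 : ∀ f, k f ≠ 0) :
    HasSecondDeriv (fun f => k f * cos f) fun f => 2 * e - (4 - 3 / k f) * (k f * cos f) := by
  have hk' := hasDerivAt_of_eq_one_add_mul_cos hk
  refine ⟨fun f => -(k f * sin f) - e * (sin f * cos f), fun f => ?_, fun f => ?_⟩
  · exact ((hk' f).mul (hasDerivAt_cos f)).congr_deriv (by ring)
  · have key : (4 - 3 / k f) * (k f * cos f) = 4 * k f * cos f - 3 * cos f := by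
      field_simp [hk0 f]
    refine (((hk' f).mul (hasDerivAt_sin f)).neg.sub
      (((hasDerivAt_sin f).mul (hasDerivAt_cos f)).const_mul e)).congr_deriv ?_
    linear_combination key + 2 * e * sin_sq_add_cos_sq f + 3 * cos f * hk f

theorem hasSecondDeriv_mul_mul_sin (hk : ∀ f, k f = 1 + e * cos f) (hk0 : ∀ f, k f ≠ 0)
    (hJ : ∀ f, HasDerivAt J (1 / k f ^ 2) f) :
    HasSecondDeriv (fun f => k f * J f * sin f)
      fun f => 2 * cos f / k f - (4 - 3 / k f) * (k f * J f * sin f) := by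
  have hk' := hasDerivAt_of_eq_one_add_mul_cos hk
  refine ⟨fun f => k f * J f * cos f - e * sin f ^ 2 * J f + sin f / k f,
    fun f => ?_, fun f => ?_⟩
  · refine (((hk' f).mul (hJ f)).mul (hasDerivAt_sin f)).congr_deriv ?_
    simp only [Pi.mul_apply]
    field_simp [hk0 f]
    ring
  · refine (((((hk' f).mul (hJ f)).mul (hasDerivAt_cos f)).sub
      ((((hasDerivAt_sin f).pow 2).const_mul e).mul (hJ f))).add
      ((hasDerivAt_sin f).div (hk' f) (hk0 f))).congr_deriv ?_
    simp only [Pi.mul_apply, Pi.pow_apply]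
    field_simp [hk0 f]
    rw [hk]
    ring

theorem hasDerivAt_yamanakaAnkersen_theta (hk : ∀ f, k f = 1 + e * cos f) (hk0 : ∀ f, k f ≠ 0)
    (hJ : ∀ f, HasDerivAt J (1 / k f ^ 2) f) {K₁ K₂ K₃ K₄ : ℝ} {ρ θ : ℝ → ℝ}
    (hρ : ∀ f, ρ f = K₁ * (1 - (3/2) * e * k f * J f * sin f)
      + K₂ * k f * sin f + K₃ * k f * cos f)
    (hθ : ∀ f, θ f = K₄ - (3/2) * K₁ * (k f) ^ 2 * J f
      + K₂ * (1 + k f) * cos f - K₃ * (1 + k f) * sin f) (f : ℝ) :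
    HasDerivAt θ (K₁ / 2 + e * K₃ - 2 * ρ f) f := by
  have hk' := hasDerivAt_of_eq_one_add_mul_cos hk
  rw [show θ = _ from funext hθ, hρ]
  refine ((((((hk' f).pow 2).const_mul (3 / 2 * K₁)).mul (hJ f)).const_sub K₄).add
    ((((hk' f).const_add 1).const_mul K₂).mul (hasDerivAt_cos f))).sub
    ((((hk' f).const_add 1).const_mul K₃).mul (hasDerivAt_sin f)) |>.congr_deriv ?_
  simp only [Pi.pow_apply]
  linear_combination (-(3 / 2) * K₁) * mul_one_div_cancel (pow_ne_zero 2 (hk0 f))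
    + e * K₃ * sin_sq_add_cos_sq f + (K₂ * sin f + K₃ * cos f) * hk f

theorem hasSecondDeriv_yamanakaAnkersen_rho (hk : ∀ f, k f = 1 + e * cos f)
    (hk0 : ∀ f, k f ≠ 0) (hJ : ∀ f, HasDerivAt J (1 / k f ^ 2) f) {K₁ K₂ K₃ : ℝ} {ρ : ℝ → ℝ}
    (hρ : ∀ f, ρ f = K₁ * (1 - (3/2) * e * k f * J f * sin f)
      + K₂ * k f * sin f + K₃ * k f * cos f) :
    HasSecondDeriv ρ fun f => 2 * (K₁ / 2 + e * K₃) - (4 - 3 / k f) * ρ f := by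
  have hρ_eq : ρ = fun f => K₁ * (1 - 3 / 2 * e * (k f * J f * sin f))
      + K₂ * (k f * sin f) + K₃ * (k f * cos f) :=
    funext fun f => by rw [hρ]; ring
  subst hρ_eq
  refine ((((hasSecondDeriv_mul_mul_sin hk hk0 hJ).const_mul (3 / 2 * e)).const_sub 1).const_mul K₁
    |>.add ((hasSecondDeriv_mul_sin hk hk0).const_mul K₂)
    |>.add ((hasSecondDeriv_mul_cos hk hk0).const_mul K₃)).congr fun f => ?_
  field_simp [hk0 f]
  rw [hk]
  ring

end TschaunerHempel

theorem stmt_8_general (e : ℝ) (he0 : 0 ≤ e) (he1 : e < 1)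
    (k : ℝ → ℝ) (hk : ∀ f, k f = 1 + e * Real.cos f)
    (J : ℝ → ℝ) (hJ' : ∀ f, deriv J f = 1 / (k f) ^ 2)
    (K₁ K₂ K₃ K₄ K₅ K₆ : ℝ) (ρ θ φ : ℝ → ℝ)
    (hρ : ∀ f, ρ f = K₁ * (1 - (3/2) * e * k f * J f * Real.sin f)
      + K₂ * k f * Real.sin f + K₃ * k f * Real.cos f)
    (hθ : ∀ f, θ f = K₄ - (3/2) * K₁ * (k f) ^ 2 * J f
      + K₂ * (1 + k f) * Real.cos f - K₃ * (1 + k f) * Real.sin f)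
    (hφ : ∀ f, φ f = K₅ * Real.sin f + K₆ * Real.cos f) :
    (∀ f, deriv (deriv ρ) f - 2 * deriv θ f - (3 / k f) * ρ f = 0) ∧
    (∀ f, deriv (deriv θ) f + 2 * deriv ρ f = 0) ∧
    (∀ f, deriv (deriv φ) f + φ f = 0) := by
  have hk0 (f : ℝ) : k f ≠ 0 :=
    hk f ▸ one_add_mul_cos_ne_zero (abs_lt.2 ⟨by linarith, he1⟩) f
  -- `J' = 1/k²` never vanishes, so `J` is differentiable everywhere.
  have hJ (f : ℝ) : HasDerivAt J (1 / k f ^ 2) f :=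
    hJ' f ▸ (differentiableAt_of_deriv_ne_zero (by simp [hJ', hk0])).hasDerivAt
  have hφ'' : HasSecondDeriv φ fun f => -φ f := by
    rw [show φ = _ from funext hφ]
    exact ((hasSecondDeriv_sin.const_mul K₅).add (hasSecondDeriv_cos.const_mul K₆)).congr
      fun f => by ring
  obtain ⟨hρ_eq, hθ_eq⟩ := tschaunerHempel_inPlane_of_firstIntegral
    (hasDerivAt_yamanakaAnkersen_theta hk hk0 hJ hρ hθ)
    (hasSecondDeriv_yamanakaAnkersen_rho hk hk0 hJ hρ)
  exact ⟨hρ_eq, hθ_eq, fun f => by rw [hφ''.deriv_deriv]; ring⟩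

/-- The Yamanaka–Ankersen general solution
`ρ̃ = K₁(1 − (3/2)e·k·J·sin f) + K₂·k·sin f + K₃·k·cos f`,
`θ = K₄ − (3/2)K₁·k²·J + K₂(1+k)cos f − K₃(1+k)sin f`,
`φ = K₅ sin f + K₆ cos f`, with `k = 1 + e·cos f` and `J' = 1/k²`,
solves the linear Tschauner–Hempel equations
`ρ̃'' − 2θ' − 3ρ̃/k = 0`, `θ'' + 2ρ̃' = 0`, `φ'' + φ = 0`. -/
theorem stmt_8 (e : ℝ) (he0 : 0 ≤ e) (he1 : e < 1)
    (k : ℝ → ℝ) (hk : ∀ f, k f = 1 + e * Real.cos f)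
    (J : ℝ → ℝ) (hJ : Differentiable ℝ J) (hJ' : ∀ f, deriv J f = 1 / (k f) ^ 2)
    (K₁ K₂ K₃ K₄ K₅ K₆ : ℝ) (ρ θ φ : ℝ → ℝ)
    (hρ : ∀ f, ρ f = K₁ * (1 - (3/2) * e * k f * J f * Real.sin f)
      + K₂ * k f * Real.sin f + K₃ * k f * Real.cos f)
    (hθ : ∀ f, θ f = K₄ - (3/2) * K₁ * (k f) ^ 2 * J f
      + K₂ * (1 + k f) * Real.cos f - K₃ * (1 + k f) * Real.sin f)
    (hφ : ∀ f, φ f = K₅ * Real.sin f + K₆ * Real.cos f) :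
    (∀ f, deriv (deriv ρ) f - 2 * deriv θ f - (3 / k f) * ρ f = 0) ∧
    (∀ f, deriv (deriv θ) f + 2 * deriv ρ f = 0) ∧
    (∀ f, deriv (deriv φ) f + φ f = 0) :=
  stmt_8_general e he0 he1 k hk J hJ' K₁ K₂ K₃ K₄ K₅ K₆ ρ θ φ hρ hθ hφ
end
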